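/- arXiv:1002.4107 — 3 statements merged into one kernel-verified Lean document; each statement's English description precedes it below -/
import Mathlib

section
/- Let n be odd, V = ℂ^{2n} the symplectic model of Jordan type [n,n] as above, and let W₁ = span(α vₙ + β wₙ) with (α,β) ≠ (0,0). Then the nilpotent endomorphism induced by x on W₁^⊥/W₁ has Jordan type [n−1, n−1]. -/
/-!
Let `L = W₁` and `W = W₁^⊥`. For `k ≤ n - 1` the kernel of `x̄^k` on `W/L` is `x^{-k}(L)/L`,
provided `x^{-k}(L) ⊆ W`. Since `n` is odd, `ω(w, α vₙ + β wₙ) = β a - α b`, where `a` and `b` are the `v₁`-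
and `w₁`-coordinates of `w`; if `x^k w ∈ L` then `(a, b)` is proportional to `(α, β)`, so indeed
`x^{-k}(L) ⊆ W`. As `L ⊆ im x^k`, `dim x^{-k}(L) = dim ker x^k + 1 = 2k + 1`, hence
`dim ker x̄^k = 2k`. For `k = n - 1` this is already `dim W/L = 2n - 2`.
-/

open Matrix

/-- The nilpotent endomorphism of Jordan type `[n,n]` on `ℂ^(2n)` (the paper's model). -/
def Xnn (n : ℕ) : Matrix (Fin n ⊕ Fin n) (Fin n ⊕ Fin n) ℂ :=
  Matrix.of fun i j =>
    match i, j with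
    | Sum.inl i, Sum.inl j => if (i : ℕ) = (j : ℕ) + 1 then 1 else 0
    | Sum.inr i, Sum.inr j => if (i : ℕ) = (j : ℕ) + 1 then 1 else 0
    | _, _ => 0

/-- The symplectic form of the `[n,n]` model, as a matrix. -/
def Onn (n : ℕ) : Matrix (Fin n ⊕ Fin n) (Fin n ⊕ Fin n) ℂ :=
  Matrix.of fun i j =>
    match i, j with
    | Sum.inl i, Sum.inr j => if (i : ℕ) + (j : ℕ) = n - 1 then (-1 : ℂ) ^ (i : ℕ) else 0
    | Sum.inr i, Sum.inl j => -(if (j : ℕ) + (i : ℕ) = n - 1 then (-1 : ℂ) ^ (j : ℕ) else 0)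
    | _, _ => 0

/-- The vector `α vₙ + β wₙ` spanning the line `W₁ ⊆ Ker x`. -/
noncomputable def u0 (n : ℕ) (hn : 1 ≤ n) (α β : ℂ) : (Fin n ⊕ Fin n) → ℂ :=
  α • (Pi.single (Sum.inl (⟨n - 1, by omega⟩ : Fin n)) 1 : (Fin n ⊕ Fin n) → ℂ) +
    β • (Pi.single (Sum.inr (⟨n - 1, by omega⟩ : Fin n)) 1 : (Fin n ⊕ Fin n) → ℂ)

/-- The `ω`-orthogonal complement `W₁^⊥` of `W₁ = span(α vₙ + β wₙ)`. -/
noncomputable def Wperp (n : ℕ) (hn : 1 ≤ n) (α β : ℂ) :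
    Submodule ℂ ((Fin n ⊕ Fin n) → ℂ) :=
  LinearMap.ker ((Matrix.toLinearMap₂' ℂ (Onn n)).flip (u0 n hn α β))

/-- The line `W₁`, viewed inside `W₁^⊥`. -/
noncomputable def W1in (n : ℕ) (hn : 1 ≤ n) (α β : ℂ) :
    Submodule ℂ (Wperp n hn α β) :=
  Submodule.comap (Wperp n hn α β).subtype (Submodule.span ℂ {u0 n hn α β})


open Module LinearMap

section
variable {K V V' : Type*} [Field K] [AddCommGroup V] [Module K V] [AddCommGroup V'] [Module K V']
  [FiniteDimensional K V]

theorem finrank_map_add_finrank_ker {f : V →ₗ[K] V'} {S : Submodule K V} (h : ker f ≤ S) :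
    finrank K (S.map f) + finrank K (ker f) = finrank K S := by
  have := finrank_range_add_finrank_ker (f.domRestrict S)
  rwa [range_domRestrict, ker_domRestrict, (Submodule.comapSubtypeEquivOfLe h).finrank_eq] at this

theorem finrank_comap_eq_finrank_ker_add {f : V →ₗ[K] V'} {L : Submodule K V'}
    (hL : L ≤ range f) : finrank K (L.comap f) = finrank K (ker f) + finrank K L := by
  have := finrank_map_add_finrank_ker (ker_le_comap (p := L) f)
  rw [Submodule.map_comap_eq, inf_eq_right.mpr hL] at this
  omega

theorem finrank_ker_mapQ_pow_add {g : Module.End K V} {p : Submodule K V} (hg : p ≤ p.comap g)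
    (k : ℕ) : finrank K (ker (p.mapQ p g hg ^ k)) + finrank K p = finrank K (p.comap (g ^ k)) := by
  rw [← Submodule.mapQ_pow, Submodule.ker_mapQ]
  have := finrank_map_add_finrank_ker (f := p.mkQ) (S := p.comap (g ^ k))
    (by rw [Submodule.ker_mkQ]; exact p.le_comap_pow_of_le_comap hg k)
  rwa [Submodule.ker_mkQ] at this

theorem finrank_ker_mapQ_restrict_pow {f : Module.End K V} {W L : Submodule K V}
    (hW : ∀ u ∈ W, f u ∈ W) (hL : L.comap W.subtype ≤ (L.comap W.subtype).comap (f.restrict hW))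
    (hLW : L ≤ W) {k : ℕ} (hLk : L ≤ range (f ^ k)) (hkW : L.comap (f ^ k) ≤ W) :
    finrank K (ker ((L.comap W.subtype).mapQ _ (f.restrict hW) hL ^ k)) =
      finrank K (ker (f ^ k)) := by
  have hcomap :
      (L.comap W.subtype).comap (f.restrict hW ^ k) = (L.comap (f ^ k)).comap W.subtype := by
    rw [Module.End.pow_restrict]
    rfl
  have h := finrank_ker_mapQ_pow_add hL k
  rw [hcomap, (Submodule.comapSubtypeEquivOfLe hkW).finrank_eq,
    finrank_comap_eq_finrank_ker_add hLk, (Submodule.comapSubtypeEquivOfLe hLW).finrank_eq] at h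
  omega

end

theorem finrank_ker_funLeft_add {K σ τ : Type*} [Field K] [Fintype σ] [Fintype τ] {e : τ → σ}
    (he : Function.Injective e) :
    finrank K (ker (funLeft K K e)) + Fintype.card τ = Fintype.card σ := by
  have h := finrank_range_add_finrank_ker (funLeft K K e)
  rw [range_eq_top.mpr (funLeft_surjective_of_injective K K e he), finrank_top] at h
  simp only [finrank_fintype_fun_eq_card] at h
  omega

theorem sum_ite_val_eq_add_one {M : Type*} [AddCommMonoid M] {n : ℕ} (i : Fin n) (c : Fin n → M) :
    ∑ j : Fin n, (if (i : ℕ) = j + 1 then c j else 0) =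
      if h : 1 ≤ (i : ℕ) then c ⟨i - 1, by omega⟩ else 0 := by
  split_ifs with h
  · rw [Fintype.sum_eq_single ⟨i - 1, by omega⟩
      fun j hj => if_neg fun hij => hj (Fin.ext (by simp only; omega))]
    exact if_pos (by simp only; omega)
  · exact Finset.sum_eq_zero fun j _ => if_neg (by omega)

theorem pow_apply_of_shift {R σ : Type*} [Semiring R] {n : ℕ} {f : Module.End R (σ → R)}
    {ι : Fin n → σ}
    (hf : ∀ w i, f w (ι i) = if h : 1 ≤ (i : ℕ) then w (ι ⟨i - 1, by omega⟩) else 0)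
    (k : ℕ) (w : σ → R) (i : Fin n) :
    (f ^ k) w (ι i) = if h : k ≤ (i : ℕ) then w (ι ⟨i - k, by omega⟩) else 0 := by
  induction k generalizing i with
  | zero => simp
  | succ k ih =>
    rw [pow_succ', Module.End.mul_apply, hf]
    by_cases hi : k + 1 ≤ (i : ℕ)
    · rw [dif_pos (by omega), ih, dif_pos (by simp only; omega), dif_pos hi]
      congr 3
      simp only
      omega
    · rw [dif_neg hi]
      split_ifs with h1
      · rw [ih, dif_neg (by simp only; omega)]
      · rfl

theorem forall_shift_eq_zero_iff {M : Type*} [Zero M] {n k : ℕ} (hk : k ≤ n) (c : Fin n → M) :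
    (∀ i : Fin n, (if h : k ≤ (i : ℕ) then c ⟨i - k, by omega⟩ else 0) = 0) ↔
      ∀ j : Fin (n - k), c (Fin.castLE (by omega) j) = 0 := by
  constructor
  · intro h j
    have hj := h ⟨j + k, by omega⟩
    rw [dif_pos (Nat.le_add_left k j)] at hj
    convert hj using 2
    ext
    simp
  · intro h i
    split_ifs with hi
    · exact h ⟨i - k, by omega⟩
    · rfl

theorem Xnn_mulVec_inl (n : ℕ) (w : (Fin n ⊕ Fin n) → ℂ) (i : Fin n) :
    (Xnn n *ᵥ w) (Sum.inl i) = if h : 1 ≤ (i : ℕ) then w (Sum.inl ⟨i - 1, by omega⟩) else 0 := by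
  simpa [mulVec, dotProduct, Fintype.sum_sum_type, Xnn] using sum_ite_val_eq_add_one i _

theorem Xnn_mulVec_inr (n : ℕ) (w : (Fin n ⊕ Fin n) → ℂ) (i : Fin n) :
    (Xnn n *ᵥ w) (Sum.inr i) = if h : 1 ≤ (i : ℕ) then w (Sum.inr ⟨i - 1, by omega⟩) else 0 := by
  simpa [mulVec, dotProduct, Fintype.sum_sum_type, Xnn] using sum_ite_val_eq_add_one i _

theorem Xnn_pow_apply_inl (n k : ℕ) (w : (Fin n ⊕ Fin n) → ℂ) (i : Fin n) :
    ((Xnn n).mulVecLin ^ k) w (Sum.inl i) =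
      if h : k ≤ (i : ℕ) then w (Sum.inl ⟨i - k, by omega⟩) else 0 :=
  pow_apply_of_shift (Xnn_mulVec_inl n) k w i

theorem Xnn_pow_apply_inr (n k : ℕ) (w : (Fin n ⊕ Fin n) → ℂ) (i : Fin n) :
    ((Xnn n).mulVecLin ^ k) w (Sum.inr i) =
      if h : k ≤ (i : ℕ) then w (Sum.inr ⟨i - k, by omega⟩) else 0 :=
  pow_apply_of_shift (Xnn_mulVec_inr n) k w i

theorem ker_Xnn_pow {n k : ℕ} (hk : k ≤ n) :
    ker ((Xnn n).mulVecLin ^ k) =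
      ker (funLeft ℂ ℂ (Sum.map (Fin.castLE (Nat.sub_le n k)) (Fin.castLE (Nat.sub_le n k)))) := by
  ext w
  simp only [mem_ker, funext_iff, Sum.forall, funLeft_apply, Sum.map_inl, Sum.map_inr,
    Pi.zero_apply, Xnn_pow_apply_inl, Xnn_pow_apply_inr]
  exact and_congr (forall_shift_eq_zero_iff hk fun i => w (Sum.inl i))
    (forall_shift_eq_zero_iff hk fun i => w (Sum.inr i))

theorem finrank_ker_Xnn_pow {n k : ℕ} (hk : k ≤ n) :
    finrank ℂ (ker ((Xnn n).mulVecLin ^ k)) = 2 * k := by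
  have h := finrank_ker_funLeft_add (K := ℂ)
    ((Fin.castLE_injective (Nat.sub_le n k)).sumMap (Fin.castLE_injective (Nat.sub_le n k)))
  rw [← ker_Xnn_pow hk] at h
  simp only [Fintype.card_sum, Fintype.card_fin] at h
  omega

@[simp]
theorem u0_apply_inl {n : ℕ} (hn : 1 ≤ n) (α β : ℂ) (i : Fin n) :
    u0 n hn α β (Sum.inl i) = if (i : ℕ) = n - 1 then α else 0 := by
  simp [u0, Pi.single_apply, Fin.ext_iff]

@[simp]
theorem u0_apply_inr {n : ℕ} (hn : 1 ≤ n) (α β : ℂ) (i : Fin n) :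
    u0 n hn α β (Sum.inr i) = if (i : ℕ) = n - 1 then β else 0 := by
  simp [u0, Pi.single_apply, Fin.ext_iff]

theorem u0_ne_zero {n : ℕ} (hn : 1 ≤ n) {α β : ℂ} (hαβ : ¬(α = 0 ∧ β = 0)) :
    u0 n hn α β ≠ 0 := by
  intro h
  exact hαβ ⟨by simpa using congrFun h (Sum.inl ⟨n - 1, by omega⟩),
    by simpa using congrFun h (Sum.inr ⟨n - 1, by omega⟩)⟩

theorem u0_mem_range_Xnn_pow {n : ℕ} (hn : 1 ≤ n) (α β : ℂ) {k : ℕ} (hk : k ≤ n - 1) :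
    u0 n hn α β ∈ range ((Xnn n).mulVecLin ^ k) := by
  have htop : u0 n hn α β = ((Xnn n).mulVecLin ^ (n - 1))
      (α • Pi.single (Sum.inl ⟨0, hn⟩) 1 + β • Pi.single (Sum.inr ⟨0, hn⟩) 1) := by
    ext (i | i) <;> have := i.isLt <;>
      simp only [u0_apply_inl, u0_apply_inr, Xnn_pow_apply_inl, Xnn_pow_apply_inr, Pi.add_apply,
        Pi.smul_apply, Pi.single_apply, Sum.inl.injEq, Sum.inr.injEq, reduceCtorEq, Fin.mk.injEq,
        smul_eq_mul, mul_ite, mul_one, mul_zero, if_false, add_zero, zero_add, dite_eq_ite] <;>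
      split_ifs <;> first | rfl | omega
  rw [htop, ← pow_mul_pow_sub _ hk, Module.End.mul_eq_comp]
  exact range_comp_le_range _ _ (mem_range_self _ _)

theorem Onn_mulVec_u0 {n : ℕ} (hn : 1 ≤ n) (hodd : Odd n) (α β : ℂ) :
    Onn n *ᵥ u0 n hn α β =
      β • Pi.single (Sum.inl ⟨0, hn⟩) 1 - α • Pi.single (Sum.inr ⟨0, hn⟩) 1 := by
  have hsign : (-1 : ℂ) ^ (n - 1) = 1 := (Nat.Odd.sub_odd hodd odd_one).neg_one_pow
  rw [u0, mulVec_add, mulVec_smul, mulVec_smul, mulVec_single_one, mulVec_single_one]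
  ext (i | i) <;> simp +contextual [Onn, Pi.single_apply, Fin.ext_iff, hsign]

theorem mem_Wperp_iff {n : ℕ} (hn : 1 ≤ n) (hodd : Odd n) (α β : ℂ) (w : (Fin n ⊕ Fin n) → ℂ) :
    w ∈ Wperp n hn α β ↔ β * w (Sum.inl ⟨0, hn⟩) = α * w (Sum.inr ⟨0, hn⟩) := by
  rw [Wperp, mem_ker, flip_apply, toLinearMap₂'_apply', Onn_mulVec_u0 hn hodd]
  simp [dotProduct_sub, dotProduct_smul, dotProduct_single, mul_comm, sub_eq_zero]

theorem span_u0_le_Wperp {n : ℕ} (hn : 1 ≤ n) (hodd : Odd n) (α β : ℂ) :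
    Submodule.span ℂ {u0 n hn α β} ≤ Wperp n hn α β := by
  rw [Submodule.span_singleton_le_iff_mem, mem_Wperp_iff hn hodd, u0_apply_inl, u0_apply_inr]
  split_ifs <;> ring

theorem finrank_W1in {n : ℕ} (hn : 1 ≤ n) (hodd : Odd n) {α β : ℂ} (hαβ : ¬(α = 0 ∧ β = 0)) :
    finrank ℂ (W1in n hn α β) = 1 :=
  (Submodule.comapSubtypeEquivOfLe (span_u0_le_Wperp hn hodd α β)).finrank_eq.trans
    (finrank_span_singleton (u0_ne_zero hn hαβ))

theorem finrank_Wperp {n : ℕ} (hn : 1 ≤ n) (hodd : Odd n) {α β : ℂ} (hαβ : ¬(α = 0 ∧ β = 0)) :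
    finrank ℂ (Wperp n hn α β) + 1 = 2 * n := by
  have hne : ((toLinearMap₂' ℂ (Onn n)).flip (u0 n hn α β) : Dual ℂ _) ≠ 0 := by
    intro h
    have hβ := (mem_Wperp_iff hn hodd α β (Pi.single (Sum.inl ⟨0, hn⟩) 1)).mp (by simp [Wperp, h])
    have hα := (mem_Wperp_iff hn hodd α β (Pi.single (Sum.inr ⟨0, hn⟩) 1)).mp (by simp [Wperp, h])
    exact hαβ ⟨by simpa using hα.symm, by simpa using hβ⟩
  rw [Wperp, Module.Dual.finrank_ker_add_one_of_ne_zero hne]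
  simp only [finrank_fintype_fun_eq_card, Fintype.card_sum, Fintype.card_fin]
  ring

theorem comap_Xnn_pow_span_u0_le_Wperp {n : ℕ} (hn : 1 ≤ n) (hodd : Odd n) (α β : ℂ) {k : ℕ}
    (hk : k ≤ n - 1) :
    (Submodule.span ℂ {u0 n hn α β}).comap ((Xnn n).mulVecLin ^ k) ≤ Wperp n hn α β := by
  intro w hw
  obtain ⟨c, hc⟩ := Submodule.mem_span_singleton.mp hw
  have hinl := congrFun hc (Sum.inl ⟨k, by omega⟩)
  have hinr := congrFun hc (Sum.inr ⟨k, by omega⟩)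
  simp only [Pi.smul_apply, smul_eq_mul, u0_apply_inl, u0_apply_inr, Xnn_pow_apply_inl,
    Xnn_pow_apply_inr, dif_pos le_rfl, tsub_self] at hinl hinr
  rw [mem_Wperp_iff hn hodd, ← hinl, ← hinr]
  split_ifs <;> ring

/-- For `n` odd, the nilpotent endomorphism induced by `x` on `W₁^⊥/W₁`, where
`W₁ = span(α vₙ + β wₙ)` with `(α, β) ≠ (0,0)`, has Jordan type `[n-1, n-1]`; equivalently,
`dim Ker(x̄^k) = min(2k, 2(n-1))` for all `k`. -/
theorem induced_jordan_type_odd (n : ℕ) (hn : 1 ≤ n) (hodd : Odd n)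
    (α β : ℂ) (hαβ : ¬(α = 0 ∧ β = 0))
    (hstab : ∀ u ∈ Wperp n hn α β, (Xnn n).mulVecLin u ∈ Wperp n hn α β)
    (hmap : W1in n hn α β ≤
      (W1in n hn α β).comap ((Xnn n).mulVecLin.restrict hstab)) :
    ∀ k : ℕ,
      Module.finrank ℂ
        (LinearMap.ker
          ((Submodule.mapQ (W1in n hn α β) (W1in n hn α β)
              ((Xnn n).mulVecLin.restrict hstab) hmap) ^ k)) =
        min (2 * k) (2 * (n - 1)) := by
  set xbar := (W1in n hn α β).mapQ _ ((Xnn n).mulVecLin.restrict hstab) hmap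
  have hker (k : ℕ) (hk : k ≤ n - 1) : finrank ℂ (ker (xbar ^ k)) = 2 * k :=
    (finrank_ker_mapQ_restrict_pow hstab hmap (span_u0_le_Wperp hn hodd α β)
      ((Submodule.span_singleton_le_iff_mem _ _).mpr (u0_mem_range_Xnn_pow hn α β hk))
      (comap_Xnn_pow_span_u0_le_Wperp hn hodd α β hk)).trans (finrank_ker_Xnn_pow (by omega))
  have hquot : finrank ℂ (Wperp n hn α β ⧸ W1in n hn α β) = 2 * (n - 1) := by
    have := (W1in n hn α β).finrank_quotient_add_finrank
    rw [finrank_W1in hn hodd hαβ] at this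
    have := finrank_Wperp hn hodd hαβ
    omega
  intro k
  rcases le_total k (n - 1) with hk | hk
  · rw [hker k hk]
    omega
  · have hle : ker (xbar ^ (n - 1)) ≤ ker (xbar ^ k) := by
      rw [← pow_sub_mul_pow xbar hk]
      exact ker_le_ker_comp _ _
    have hlower := hker (n - 1) le_rfl ▸ Submodule.finrank_mono hle
    have hupper := hquot ▸ Submodule.finrank_le (ker (xbar ^ k))
    omega
end

section
/- The polynomial f = a²x + 2aby + b²z + (xz − y²)ⁿ ∈ ℂ[a, b, x, y, z] (n ≥ 2) is irreducible, and the singular locus of the hypersurface {f = 0} ⊂ ℂ⁵ is the set {a = b = 0, xz = y²}, which has dimension 2 (hence codimension 2 in the hypersurface). -/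
open MvPolynomial

/-- The polynomial `f = a²x + 2aby + b²z + (xz - y²)ⁿ` in variables
`(a, b, x, y, z) = (X 0, X 1, X 2, X 3, X 4)`. -/
noncomputable def fHyp (n : ℕ) : MvPolynomial (Fin 5) ℂ :=
  (X 0) ^ 2 * X 2 + C 2 * X 0 * X 1 * X 3 + (X 1) ^ 2 * X 4 +
    (X 2 * X 4 - (X 3) ^ 2) ^ n

section aux

local notation "R4" => MvPolynomial (Fin 4) ℂ

lemma irredX1 : Irreducible (X 1 : R4) := by
  have h2 : Irreducible ((finSuccEquiv ℂ 3).toMulEquiv (X 0 : R4)) := by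
    show Irreducible (finSuccEquiv ℂ 3 (X 0))
    rw [finSuccEquiv_X_zero]; exact Polynomial.irreducible_X
  have h0 : Irreducible (X 0 : R4) := (MulEquiv.irreducible_iff _).mp h2
  have h := (MulEquiv.irreducible_iff (renameEquiv ℂ (Equiv.swap (0:Fin 4) 1)).toMulEquiv).mp
    (?_ : Irreducible ((renameEquiv ℂ (Equiv.swap (0:Fin 4) 1)).toMulEquiv (X 1)))
  · exact h
  · show Irreducible (renameEquiv ℂ (Equiv.swap (0:Fin 4) 1) (X 1))
    rw [renameEquiv_apply, rename_X]
    have : Equiv.swap (0:Fin 4) 1 1 = 0 := by decide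
    rw [this]; exact h0

/-- The substitution `b ↦ 0` (kills `X 1` only). -/
noncomputable def psi2 : R4 →ₐ[ℂ] R4 := aeval ![X 0, 0, X 2, X 3]

/-- The substitution `a ↦ 0, b ↦ 0`. -/
noncomputable def psi : R4 →ₐ[ℂ] R4 := aeval ![0, 0, X 2, X 3]

lemma psi2_X1 : psi2 (X 1) = 0 := by simp [psi2]
lemma psi2_m : psi2 (C 2 * X 0 * X 2) = C 2 * X 0 * X 2 := by simp [psi2]
lemma psi_X1 : psi (X 1) = 0 := by simp [psi]
lemma psi_m : psi (C 2 * X 0 * X 2) = 0 := by simp [psi]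
lemma psi_c (n : ℕ) :
    psi ((X 0) ^ 2 * X 3 + (X 1 * X 3 - (X 2) ^ 2) ^ n) = (- (X 2 : R4) ^ 2) ^ n := by
  simp [psi]

lemma m_ne_zero : (C 2 * X 0 * X 2 : R4) ≠ 0 := by
  refine mul_ne_zero (mul_ne_zero ?_ (X_ne_zero 0)) (X_ne_zero 2)
  simp [MvPolynomial.C_eq_zero]

lemma psi_c_ne_zero (n : ℕ) :
    psi ((X 0) ^ 2 * X 3 + (X 1 * X 3 - (X 2) ^ 2) ^ n) ≠ 0 := by
  rw [psi_c]
  exact pow_ne_zero _ (neg_ne_zero.mpr (pow_ne_zero _ (X_ne_zero 2)))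

lemma coeff_quad2 {S : Type*} [CommRing S] (u v w : S) :
    (Polynomial.C u * Polynomial.X ^ 2 + Polynomial.C v * Polynomial.X
      + Polynomial.C w).coeff 2 = u := by
  simp only [Polynomial.coeff_add, Polynomial.coeff_C_mul, Polynomial.coeff_X_pow,
    Polynomial.coeff_C, Polynomial.coeff_X]
  norm_num

lemma coeff_quad1 {S : Type*} [CommRing S] (u v w : S) :
    (Polynomial.C u * Polynomial.X ^ 2 + Polynomial.C v * Polynomial.X
      + Polynomial.C w).coeff 1 = v := by
  simp only [Polynomial.coeff_add, Polynomial.coeff_C_mul, Polynomial.coeff_X_pow,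
    Polynomial.coeff_C, Polynomial.coeff_X]
  norm_num

lemma coeff_quad0 {S : Type*} [CommRing S] (u v w : S) :
    (Polynomial.C u * Polynomial.X ^ 2 + Polynomial.C v * Polynomial.X
      + Polynomial.C w).coeff 0 = w := by
  simp only [Polynomial.coeff_add, Polynomial.coeff_C_mul, Polynomial.coeff_X_pow,
    Polynomial.coeff_C, Polynomial.coeff_X]
  norm_num

/-- A non-leading-degree factor of the quadratic is a unit. -/
lemma const_factor_unit (n : ℕ) (r : R4) (B : Polynomial R4)
    (h : Polynomial.C (X 1 : R4) * Polynomial.X ^ 2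
      + Polynomial.C (C 2 * X 0 * X 2) * Polynomial.X
      + Polynomial.C ((X 0) ^ 2 * X 3 + (X 1 * X 3 - (X 2) ^ 2) ^ n)
      = Polynomial.C r * B) : IsUnit (Polynomial.C r : Polynomial R4) := by
  have h2 : (X 1 : R4) = r * B.coeff 2 := by
    have := congrArg (fun q => Polynomial.coeff q 2) h
    simp only [coeff_quad2, Polynomial.coeff_C_mul] at this
    exact this
  rcases irredX1.isUnit_or_isUnit h2 with hu | hu
  · exact Polynomial.isUnit_C.mpr hu
  · exfalso
    have h1 : (C 2 * X 0 * X 2 : R4) = r * B.coeff 1 := by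
      have := congrArg (fun q => Polynomial.coeff q 1) h
      simp only [coeff_quad1, Polynomial.coeff_C_mul] at this
      exact this
    -- apply psi2 : X 1 ↦ 0, so psi2 r * psi2 (B.coeff 2) = 0, psi2 (B.coeff 2) is a unit
    have hru : psi2 r * psi2 (B.coeff 2) = 0 := by
      rw [← map_mul, ← h2, psi2_X1]
    have hBu : psi2 (B.coeff 2) ≠ 0 := (hu.map psi2).ne_zero
    have hr0 : psi2 r = 0 := by
      rcases mul_eq_zero.mp hru with h' | h'
      · exact h'
      · exact absurd h' hBu
    have h1' := congrArg psi2 h1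
    rw [psi2_m, map_mul, hr0, zero_mul] at h1'
    exact m_ne_zero h1'

theorem irred_quad (n : ℕ) (hn : 2 ≤ n) :
    Irreducible (Polynomial.C (X 1 : R4) * Polynomial.X ^ 2
      + Polynomial.C (C 2 * X 0 * X 2) * Polynomial.X
      + Polynomial.C ((X 0) ^ 2 * X 3 + (X 1 * X 3 - (X 2) ^ 2) ^ n)) := by
  set c : R4 := (X 0) ^ 2 * X 3 + (X 1 * X 3 - (X 2) ^ 2) ^ n with hc
  set Q : Polynomial R4 := Polynomial.C (X 1 : R4) * Polynomial.X ^ 2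
      + Polynomial.C (C 2 * X 0 * X 2) * Polynomial.X + Polynomial.C c with hQ
  have hdeg : Q.natDegree = 2 := Polynomial.natDegree_quadratic (X_ne_zero 1)
  constructor
  · exact Polynomial.not_isUnit_of_natDegree_pos Q (by omega)
  · intro A B hAB
    have hQ0 : Q ≠ 0 := fun h => by simp [h] at hdeg
    have hA0 : A ≠ 0 := fun h => hQ0 (by rw [hAB, h, zero_mul])
    have hB0 : B ≠ 0 := fun h => hQ0 (by rw [hAB, h, mul_zero])
    have hsum : A.natDegree + B.natDegree = 2 := by
      rw [← Polynomial.natDegree_mul hA0 hB0, ← hAB, hdeg]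
    rcases Nat.lt_or_ge A.natDegree 1 with hA1 | hA1
    · -- A is a constant
      have hAd0 : A.natDegree = 0 := by omega
      obtain ⟨r, hr⟩ := Polynomial.natDegree_eq_zero.mp hAd0
      left
      rw [← hr]
      exact const_factor_unit n r B (by rw [← hQ, hAB, ← hr])
    rcases Nat.lt_or_ge B.natDegree 1 with hB1 | hB1
    · have hBd0 : B.natDegree = 0 := by omega
      obtain ⟨r, hr⟩ := Polynomial.natDegree_eq_zero.mp hBd0
      right
      rw [← hr]
      refine const_factor_unit n r A ?_
      rw [← hQ, hAB, ← hr, mul_comm]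
    · -- both degree 1 : contradiction
      exfalso
      have hdA : A.natDegree = 1 := by omega
      have hdB : B.natDegree = 1 := by omega
      have hAe : A = Polynomial.C (A.coeff 1) * Polynomial.X + Polynomial.C (A.coeff 0) :=
        Polynomial.eq_X_add_C_of_degree_le_one
          (by rw [Polynomial.degree_eq_natDegree hA0, hdA]; exact_mod_cast le_rfl)
      have hBe : B = Polynomial.C (B.coeff 1) * Polynomial.X + Polynomial.C (B.coeff 0) :=
        Polynomial.eq_X_add_C_of_degree_le_one
          (by rw [Polynomial.degree_eq_natDegree hB0, hdB]; exact_mod_cast le_rfl)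
      set a1 := A.coeff 1; set a0 := A.coeff 0
      set b1 := B.coeff 1; set b0 := B.coeff 0
      have hexp : Q = Polynomial.C (a1 * b1) * Polynomial.X ^ 2
          + Polynomial.C (a1 * b0 + a0 * b1) * Polynomial.X + Polynomial.C (a0 * b0) := by
        rw [hAB, hAe, hBe]; simp only [Polynomial.C_mul, Polynomial.C_add]; ring
      have e2 : (X 1 : R4) = a1 * b1 := by
        have := congrArg (fun q => Polynomial.coeff q 2) hexp
        simp only [hQ, coeff_quad2] at this
        exact this
      have e1 : (C 2 * X 0 * X 2 : R4) = a1 * b0 + a0 * b1 := by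
        have := congrArg (fun q => Polynomial.coeff q 1) hexp
        simp only [hQ, coeff_quad1] at this
        exact this
      have e0 : c = a0 * b0 := by
        have := congrArg (fun q => Polynomial.coeff q 0) hexp
        simp only [hQ, coeff_quad0] at this
        exact this
      have hψc : psi c ≠ 0 := psi_c_ne_zero n
      have hψ2 : psi a1 * psi b1 = 0 := by rw [← map_mul, ← e2, psi_X1]
      have hψ1 : psi a1 * psi b0 + psi a0 * psi b1 = 0 := by
        have := congrArg psi e1
        rw [psi_m] at this
        rw [← map_mul, ← map_mul, ← map_add, ← this]
      have hψ0 : psi a0 * psi b0 = psi c := by rw [← map_mul, e0]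
      rcases irredX1.isUnit_or_isUnit e2 with hu | hu
      · have ha1 : psi a1 ≠ 0 := (hu.map psi).ne_zero
        have hb1 : psi b1 = 0 := by
          rcases mul_eq_zero.mp hψ2 with h' | h'
          · exact absurd h' ha1
          · exact h'
        have hb0 : psi b0 = 0 := by
          rw [hb1, mul_zero, add_zero] at hψ1
          rcases mul_eq_zero.mp hψ1 with h' | h'
          · exact absurd h' ha1
          · exact h'
        rw [hb0, mul_zero] at hψ0
        exact hψc hψ0.symm
      · have hb1 : psi b1 ≠ 0 := (hu.map psi).ne_zero
        have ha1 : psi a1 = 0 := by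
          rcases mul_eq_zero.mp hψ2 with h' | h'
          · exact h'
          · exact absurd h' hb1
        have ha0 : psi a0 = 0 := by
          rw [ha1, zero_mul, zero_add] at hψ1
          rcases mul_eq_zero.mp hψ1 with h' | h'
          · exact h'
          · exact absurd h' hb1
        rw [ha0, zero_mul] at hψ0
        exact hψc hψ0.symm

lemma finSuccEquiv_fHyp (n : ℕ) : (finSuccEquiv ℂ 4) (fHyp n) =
    Polynomial.C (X 1 : R4) * Polynomial.X ^ 2
      + Polynomial.C (C 2 * X 0 * X 2) * Polynomial.X
      + Polynomial.C ((X 0) ^ 2 * X 3 + (X 1 * X 3 - (X 2) ^ 2) ^ n) := by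
  have e1 : (X (1:Fin 5) : MvPolynomial (Fin 5) ℂ) = X (Fin.succ 0) := rfl
  have e2 : (X (2:Fin 5) : MvPolynomial (Fin 5) ℂ) = X (Fin.succ 1) := rfl
  have e3 : (X (3:Fin 5) : MvPolynomial (Fin 5) ℂ) = X (Fin.succ 2) := rfl
  have e4 : (X (4:Fin 5) : MvPolynomial (Fin 5) ℂ) = X (Fin.succ 3) := rfl
  rw [fHyp, e1, e2, e3, e4]
  simp only [map_add, map_mul, map_pow, map_sub, finSuccEquiv_X_zero, finSuccEquiv_X_succ,
    map_ofNat, Polynomial.C_mul, Polynomial.C_pow, Polynomial.C_sub]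
  ring_nf

theorem fHyp_irred (n : ℕ) (hn : 2 ≤ n) : Irreducible (fHyp n) := by
  have h := irred_quad n hn
  rw [← finSuccEquiv_fHyp n] at h
  exact (MulEquiv.irreducible_iff (finSuccEquiv ℂ 4).toMulEquiv).mp h

end aux

section evals

lemma eval_fHyp (n : ℕ) (p : Fin 5 → ℂ) :
    eval p (fHyp n) = p 0 ^ 2 * p 2 + 2 * p 0 * p 1 * p 3 + p 1 ^ 2 * p 4
      + (p 2 * p 4 - p 3 ^ 2) ^ n := by
  simp [fHyp]

lemma eval_pd0 (n : ℕ) (p : Fin 5 → ℂ) :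
    eval p (pderiv 0 (fHyp n)) = 2 * p 0 * p 2 + 2 * p 1 * p 3 := by
  simp [fHyp, pderiv_X, Pi.single_apply]; ring_nf

lemma eval_pd1 (n : ℕ) (p : Fin 5 → ℂ) :
    eval p (pderiv 1 (fHyp n)) = 2 * p 0 * p 3 + 2 * p 1 * p 4 := by
  simp [fHyp, pderiv_X, Pi.single_apply]; ring_nf

lemma eval_pd2 (n : ℕ) (p : Fin 5 → ℂ) :
    eval p (pderiv 2 (fHyp n)) = p 0 ^ 2 + n * p 4 * (p 2 * p 4 - p 3 ^ 2) ^ (n - 1) := by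
  simp [fHyp, pderiv_X, Pi.single_apply]; ring_nf

lemma eval_pd3 (n : ℕ) (p : Fin 5 → ℂ) :
    eval p (pderiv 3 (fHyp n)) = 2 * p 0 * p 1 - 2 * n * p 3 * (p 2 * p 4 - p 3 ^ 2) ^ (n - 1) := by
  simp [fHyp, pderiv_X, Pi.single_apply]; ring_nf

lemma eval_pd4 (n : ℕ) (p : Fin 5 → ℂ) :
    eval p (pderiv 4 (fHyp n)) = p 1 ^ 2 + n * p 2 * (p 2 * p 4 - p 3 ^ 2) ^ (n - 1) := by
  simp [fHyp, pderiv_X, Pi.single_apply]; ring_nf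

end evals

/-- For `n ≥ 2`, the polynomial `f = a²x + 2aby + b²z + (xz - y²)ⁿ ∈ ℂ[a,b,x,y,z]` is
irreducible, and the singular locus of the hypersurface `{f = 0} ⊆ ℂ⁵` is the set
`{a = b = 0, xz = y²}`, which is 2-dimensional: it is the image of the parametrization
`(s, t) ↦ (0, 0, s², st, t²)`. -/
theorem fHyp_irreducible_and_singular_locus (n : ℕ) (hn : 2 ≤ n) :
    Irreducible (fHyp n) ∧
    {p : Fin 5 → ℂ | eval p (fHyp n) = 0 ∧ ∀ i, eval p (pderiv i (fHyp n)) = 0} =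
      {p : Fin 5 → ℂ | p 0 = 0 ∧ p 1 = 0 ∧ p 2 * p 4 = (p 3) ^ 2} ∧
    {p : Fin 5 → ℂ | p 0 = 0 ∧ p 1 = 0 ∧ p 2 * p 4 = (p 3) ^ 2} =
      Set.range (fun st : ℂ × ℂ => ![0, 0, st.1 ^ 2, st.1 * st.2, st.2 ^ 2]) := by
  refine ⟨fHyp_irred n hn, ?_, ?_⟩
  · ext p
    simp only [Set.mem_setOf_eq]
    constructor
    · rintro ⟨hf, hD⟩
      rw [eval_fHyp] at hf
      have h2 := hD 2; rw [eval_pd2] at h2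
      have h3 := hD 3; rw [eval_pd3] at h3
      have h4 := hD 4; rw [eval_pd4] at h4
      set g : ℂ := p 2 * p 4 - p 3 ^ 2 with hgdef
      set G : ℂ := g ^ (n - 1) with hGdef
      have hpow : g ^ n = g * G := by
        rw [hGdef, ← pow_succ']
        congr 1
        omega
      rw [hpow] at hf
      have hkey : g * G * (1 - 2 * (n : ℂ)) = 0 := by
        linear_combination hf - p 2 * h2 - p 3 * h3 - p 4 * h4
      have hcoef : (1 : ℂ) - 2 * n ≠ 0 := by
        intro h
        have h' : ((2 * n : ℕ) : ℂ) = ((1 : ℕ) : ℂ) := by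
          push_cast
          linear_combination -h
        have := Nat.cast_inj (R := ℂ) |>.mp h'
        omega
      have hgG : g * G = 0 := by
        rcases mul_eq_zero.mp hkey with h | h
        · exact h
        · exact absurd h hcoef
      have hg : g = 0 := by
        have : g ^ n = 0 := by rw [hpow, hgG]
        exact pow_eq_zero_iff (by omega) |>.mp this
      have hG : G = 0 := by rw [hGdef, hg, zero_pow (by omega)]
      rw [hG] at h2 h4
      simp only [mul_zero, add_zero] at h2 h4
      exact ⟨pow_eq_zero_iff (two_ne_zero) |>.mp h2,
        pow_eq_zero_iff (two_ne_zero) |>.mp h4, sub_eq_zero.mp hg⟩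
    · rintro ⟨h0, h1, h23⟩
      have hg : p 2 * p 4 - p 3 ^ 2 = 0 := sub_eq_zero.mpr h23
      have hG : (p 2 * p 4 - p 3 ^ 2) ^ (n - 1) = 0 := by rw [hg, zero_pow (by omega)]
      have hz : (0 : ℂ) ^ n = 0 := zero_pow (by omega)
      constructor
      · rw [eval_fHyp, h0, h1, hg, hz]; ring
      · intro i
        fin_cases i
        · show eval p (pderiv 0 (fHyp n)) = 0
          rw [eval_pd0, h0, h1]; ring
        · show eval p (pderiv 1 (fHyp n)) = 0
          rw [eval_pd1, h0, h1]; ring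
        · show eval p (pderiv 2 (fHyp n)) = 0
          rw [eval_pd2, h0, hG]; ring
        · show eval p (pderiv 3 (fHyp n)) = 0
          rw [eval_pd3, h0, h1, hG]; ring
        · show eval p (pderiv 4 (fHyp n)) = 0
          rw [eval_pd4, h1, hG]; ring
  · ext p
    simp only [Set.mem_setOf_eq, Set.mem_range]
    constructor
    · rintro ⟨h0, h1, h23⟩
      by_cases hp2 : p 2 = 0
      · have hp3 : p 3 = 0 := by
          have : p 3 ^ 2 = 0 := by rw [← h23, hp2, zero_mul]
          exact pow_eq_zero_iff two_ne_zero |>.mp this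
        obtain ⟨t, ht⟩ := IsAlgClosed.exists_pow_nat_eq (k := ℂ) (p 4) zero_lt_two
        refine ⟨(0, t), ?_⟩
        funext i
        fin_cases i <;>
          simp [h0, h1, hp2, hp3, ht]
      · obtain ⟨s, hs⟩ := IsAlgClosed.exists_pow_nat_eq (k := ℂ) (p 2) zero_lt_two
        have hs0 : s ≠ 0 := by
          intro h
          rw [h] at hs
          simp at hs
          exact hp2 hs.symm
        refine ⟨(s, p 3 / s), ?_⟩
        funext i
        have ht2 : (p 3 / s) ^ 2 = p 4 := by
          field_simp
          rw [← h23, hs]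
        have ht1 : s * (p 3 / s) = p 3 := by field_simp
        fin_cases i <;>
          simp [h0, h1, hs, ht1, ht2]
    · rintro ⟨⟨s, t⟩, rfl⟩
      refine ⟨rfl, rfl, by simp; ring⟩
end

section
/- In the ℤ/3-graded model of the Lie algebra g₂ with g₂⁽⁰⁾ = sl₃, g₂⁽¹⁾ = ℂ³, g₂⁽²⁾ = (ℂ³)*, with brackets given by the natural sl₃-actions, the wedge maps ℂ³×ℂ³→(ℂ³)* and (ℂ³)*×(ℂ³)*→ℂ³, and [v, w] = (3/4)(vw − (1/3)(wv)I) ∈ sl₃ for v ∈ ℂ³, w ∈ (ℂ³)*, the Jacobi identity holds; i.e. this bracket makes sl₃ ⊕ ℂ³ ⊕ (ℂ³)* into a Lie algebra. -/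
namespace G2Model

/-- Elements of the `ℤ/3`-graded model `sl₃ ⊕ ℂ³ ⊕ (ℂ³)*` of `g₂`: a `3×3` matrix
(to be taken trace-free), a column vector and a row vector. -/
abbrev G2Carrier := Matrix (Fin 3) (Fin 3) ℂ × (Fin 3 → ℂ) × (Fin 3 → ℂ)

/-- The component `[v, w] = (3/4)(vw - (1/3)(wv)·I) ∈ sl₃` of the bracket, for a column
vector `v ∈ ℂ³` and a row vector `w ∈ (ℂ³)*`. -/
noncomputable def mu (v w : Fin 3 → ℂ) : Matrix (Fin 3) (Fin 3) ℂ :=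
  ((3 : ℂ) / 4) • (Matrix.of fun i j => v i * w j) -
    ((1 : ℂ) / 4) • ((∑ i, w i * v i) • (1 : Matrix (Fin 3) (Fin 3) ℂ))

/-- The cross product realizing the wedge maps `Λ²ℂ³ ≅ (ℂ³)*` and `Λ²(ℂ³)* ≅ ℂ³` via the
standard volume form. -/
def cross (a b : Fin 3 → ℂ) : Fin 3 → ℂ :=
  ![a 1 * b 2 - a 2 * b 1, a 2 * b 0 - a 0 * b 2, a 0 * b 1 - a 1 * b 0]

/-- The bracket on `sl₃ ⊕ ℂ³ ⊕ (ℂ³)*`: on `sl₃` the commutator, `[A, v] = Av`,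
`[A, w] = -wA`, `[v, w] = (3/4)(vw - (1/3)(wv)I)`, and the wedge maps `ℂ³ × ℂ³ → (ℂ³)*`,
`(ℂ³)* × (ℂ³)* → ℂ³` (suitably normalized), extended skew-symmetrically. -/
noncomputable def g2br (X Y : G2Carrier) : G2Carrier :=
  ⟨X.1 * Y.1 - Y.1 * X.1 + mu X.2.1 Y.2.2 - mu Y.2.1 X.2.2,
    X.1.mulVec Y.2.1 - Y.1.mulVec X.2.1 + cross X.2.2 Y.2.2,
    Matrix.vecMul X.2.2 Y.1 - Matrix.vecMul Y.2.2 X.1 - cross X.2.1 Y.2.1⟩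

section lit
variable (a₀ a₁ a₂ b₀ b₁ b₂ : ℂ)
variable (a b c d e f g h i a' b' c' d' e' f' g' h' i' : ℂ)

lemma vadd_lit : ![a₀,a₁,a₂] + ![b₀,b₁,b₂] = ![a₀+b₀, a₁+b₁, a₂+b₂] := by
  funext k; fin_cases k <;> simp
lemma vsub_lit : ![a₀,a₁,a₂] - ![b₀,b₁,b₂] = ![a₀-b₀, a₁-b₁, a₂-b₂] := by
  funext k; fin_cases k <;> simp
lemma madd_lit : !![a,b,c;d,e,f;g,h,i] + !![a',b',c';d',e',f';g',h',i'] =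
    !![a+a',b+b',c+c';d+d',e+e',f+f';g+g',h+h',i+i'] := by
  ext k l; fin_cases k <;> fin_cases l <;> simp
lemma msub_lit : !![a,b,c;d,e,f;g,h,i] - !![a',b',c';d',e',f';g',h',i'] =
    !![a-a',b-b',c-c';d-d',e-e',f-f';g-g',h-h',i-i'] := by
  ext k l; fin_cases k <;> fin_cases l <;> simp
lemma mul_lit : !![a,b,c;d,e,f;g,h,i] * !![a',b',c';d',e',f';g',h',i'] =
    !![a*a'+b*d'+c*g', a*b'+b*e'+c*h', a*c'+b*f'+c*i';
       d*a'+e*d'+f*g', d*b'+e*e'+f*h', d*c'+e*f'+f*i';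
       g*a'+h*d'+i*g', g*b'+h*e'+i*h', g*c'+h*f'+i*i'] := by
  ext k l; fin_cases k <;> fin_cases l <;>
    simp [Matrix.mul_apply, Fin.sum_univ_three]
lemma mulVec_lit : (!![a,b,c;d,e,f;g,h,i]).mulVec ![a₀,a₁,a₂] =
    ![a*a₀+b*a₁+c*a₂, d*a₀+e*a₁+f*a₂, g*a₀+h*a₁+i*a₂] := by
  funext k; fin_cases k <;>
    simp [Matrix.mulVec, dotProduct, Fin.sum_univ_three]
lemma vecMul_lit : Matrix.vecMul ![a₀,a₁,a₂] !![a,b,c;d,e,f;g,h,i] =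
    ![a₀*a+a₁*d+a₂*g, a₀*b+a₁*e+a₂*h, a₀*c+a₁*f+a₂*i] := by
  funext k; fin_cases k <;>
    simp [Matrix.vecMul, dotProduct, Fin.sum_univ_three]
lemma cross_lit : cross ![a₀,a₁,a₂] ![b₀,b₁,b₂] =
    ![a₁*b₂ - a₂*b₁, a₂*b₀ - a₀*b₂, a₀*b₁ - a₁*b₀] := by
  funext k; fin_cases k <;> simp [cross]
lemma mu_lit : mu ![a₀,a₁,a₂] ![b₀,b₁,b₂] =
    !![3/4*(a₀*b₀) - 1/4*(b₀*a₀+b₁*a₁+b₂*a₂), 3/4*(a₀*b₁), 3/4*(a₀*b₂);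
       3/4*(a₁*b₀), 3/4*(a₁*b₁) - 1/4*(b₀*a₀+b₁*a₁+b₂*a₂), 3/4*(a₁*b₂);
       3/4*(a₂*b₀), 3/4*(a₂*b₁), 3/4*(a₂*b₂) - 1/4*(b₀*a₀+b₁*a₁+b₂*a₂)] := by
  ext k l; fin_cases k <;> fin_cases l <;>
    simp [mu, Fin.sum_univ_three, Matrix.one_apply]
end lit

section eqiff
variable {a b c d e f g h i a' b' c' d' e' f' g' h' i' : ℂ}

lemma vec3_eq_iff {a₀ a₁ a₂ b₀ b₁ b₂ : ℂ} :
    ![a₀,a₁,a₂] = ![b₀,b₁,b₂] ↔ a₀ = b₀ ∧ a₁ = b₁ ∧ a₂ = b₂ := by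
  constructor
  · intro hh
    refine ⟨congrFun hh 0, congrFun hh 1, congrFun hh 2⟩
  · rintro ⟨rfl, rfl, rfl⟩; rfl

lemma mat3_eq_iff :
    !![a,b,c;d,e,f;g,h,i] = !![a',b',c';d',e',f';g',h',i'] ↔
      (a = a' ∧ b = b' ∧ c = c') ∧ (d = d' ∧ e = e' ∧ f = f') ∧
        (g = g' ∧ h = h' ∧ i = i') := by
  constructor
  · intro hh
    have H : ∀ k l, !![a,b,c;d,e,f;g,h,i] k l = !![a',b',c';d',e',f';g',h',i'] k l := by
      rw [hh]; exact fun _ _ => rfl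
    have h00 := H 0 0; have h01 := H 0 1; have h02 := H 0 2
    have h10 := H 1 0; have h11 := H 1 1; have h12 := H 1 2
    have h20 := H 2 0; have h21 := H 2 1; have h22 := H 2 2
    simp only [Matrix.cons_val_zero, Matrix.cons_val_one, Matrix.head_cons,
      Matrix.cons_val_two, Matrix.tail_cons, Matrix.cons_val', Matrix.empty_val',
      Matrix.cons_val_fin_one, Matrix.head_fin_const, Matrix.of_apply]
      at h00 h01 h02 h10 h11 h12 h20 h21 h22
    exact ⟨⟨h00, h01, h02⟩, ⟨h10, h11, h12⟩, ⟨h20, h21, h22⟩⟩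
  · rintro ⟨⟨rfl, rfl, rfl⟩, ⟨rfl, rfl, rfl⟩, ⟨rfl, rfl, rfl⟩⟩; rfl
end eqiff

set_option maxHeartbeats 4000000 in
lemma jac_lit (a b c d e f g h a' b' c' d' e' f' g' h' a'' b'' c'' d'' e'' f'' g'' h''
    v0 v1 v2 w0 w1 w2 x0 x1 x2 y0 y1 y2 s0 s1 s2 t0 t1 t2 : ℂ) :
    g2br ⟨!![a,b,c;d,e,f;g,h,-a-e],![v0,v1,v2],![w0,w1,w2]⟩
        (g2br ⟨!![a',b',c';d',e',f';g',h',-a'-e'],![x0,x1,x2],![y0,y1,y2]⟩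
              ⟨!![a'',b'',c'';d'',e'',f'';g'',h'',-a''-e''],![s0,s1,s2],![t0,t1,t2]⟩) =
      g2br (g2br ⟨!![a,b,c;d,e,f;g,h,-a-e],![v0,v1,v2],![w0,w1,w2]⟩
              ⟨!![a',b',c';d',e',f';g',h',-a'-e'],![x0,x1,x2],![y0,y1,y2]⟩)
            ⟨!![a'',b'',c'';d'',e'',f'';g'',h'',-a''-e''],![s0,s1,s2],![t0,t1,t2]⟩ +
        g2br ⟨!![a',b',c';d',e',f';g',h',-a'-e'],![x0,x1,x2],![y0,y1,y2]⟩
          (g2br ⟨!![a,b,c;d,e,f;g,h,-a-e],![v0,v1,v2],![w0,w1,w2]⟩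
                ⟨!![a'',b'',c'';d'',e'',f'';g'',h'',-a''-e''],![s0,s1,s2],![t0,t1,t2]⟩) := by
  simp only [g2br, mu_lit, cross_lit, mul_lit, mulVec_lit, vecMul_lit,
    madd_lit, msub_lit, vadd_lit, vsub_lit, Prod.mk_add_mk, Prod.mk.injEq,
    mat3_eq_iff, vec3_eq_iff]
  and_intros <;> ring

lemma matrix_eta (A : Matrix (Fin 3) (Fin 3) ℂ) (hA : A.trace = 0) :
    A = !![A 0 0, A 0 1, A 0 2; A 1 0, A 1 1, A 1 2;
           A 2 0, A 2 1, -(A 0 0) - A 1 1] := by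
  simp only [Matrix.trace, Matrix.diag, Fin.sum_univ_three] at hA
  have hA' : A 2 2 = -(A 0 0) - A 1 1 := by linear_combination hA
  ext k l
  fin_cases k <;> fin_cases l <;>
    simp [Matrix.cons_val_zero, Matrix.cons_val_one, Matrix.head_cons,
      Matrix.cons_val_two, Matrix.tail_cons, hA']

lemma vec_eta (v : Fin 3 → ℂ) : v = ![v 0, v 1, v 2] := by
  funext k; fin_cases k <;> simp

/-- The bracket of the `ℤ/3`-graded model of `g₂` is antisymmetric and satisfies the Jacobi
(Leibniz) identity on trace-free first components, making `sl₃ ⊕ ℂ³ ⊕ (ℂ³)*` a Lie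
algebra. -/
theorem g2br_jacobi :
    (∀ X Y : G2Carrier, X.1.trace = 0 → Y.1.trace = 0 → g2br X Y = -g2br Y X) ∧
    (∀ X Y Z : G2Carrier, X.1.trace = 0 → Y.1.trace = 0 → Z.1.trace = 0 →
      g2br X (g2br Y Z) = g2br (g2br X Y) Z + g2br Y (g2br X Z)) := by
  constructor
  · rintro ⟨A, v, w⟩ ⟨B, x, y⟩ _ _
    refine Prod.ext ?_ (Prod.ext ?_ ?_)
    · show _ = _
      ext k l
      fin_cases k <;> fin_cases l <;>
        simp [g2br, mu, cross, Matrix.mul_apply, Fin.sum_univ_three, Matrix.one_apply,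
          Matrix.mulVec, Matrix.vecMul, dotProduct] <;> ring
    · show _ = _
      funext k
      fin_cases k <;>
        simp [g2br, mu, cross, Matrix.mul_apply, Fin.sum_univ_three, Matrix.one_apply,
          Matrix.mulVec, Matrix.vecMul, dotProduct] <;> ring
    · show _ = _
      funext k
      fin_cases k <;>
        simp [g2br, mu, cross, Matrix.mul_apply, Fin.sum_univ_three, Matrix.one_apply,
          Matrix.mulVec, Matrix.vecMul, dotProduct] <;> ring
  · rintro ⟨A, v, w⟩ ⟨B, x, y⟩ ⟨C, s, t⟩ hA hB hC
    rw [show ((A, v, w) : G2Carrier) = ⟨A, v, w⟩ from rfl] at *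
    rw [matrix_eta A hA, matrix_eta B hB, matrix_eta C hC,
      vec_eta v, vec_eta w, vec_eta x, vec_eta y, vec_eta s, vec_eta t]
    exact jac_lit _ _ _ _ _ _ _ _ _ _ _ _ _ _ _ _ _ _ _ _ _ _ _ _ _ _ _ _ _ _ _ _ _ _ _ _ _ _ _ _ _ _
end G2Model
end
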